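/- In a lexicographically sorted array of equal-length binary strings, for any three ordered strings K ≤ K1 ≤ K2, dist_e(K2,K) ≥ dist_e(K1,K). -/

import Mathlib

/-- value of a binary string read as a binary numeral (most significant bit first) -/
def decimal (K : List Bool) : ℕ :=
  K.foldl (fun acc b => 2 * acc + cond b 1 0) 0

/-- length of the longest common prefix of two strings -/
def lcpLen : List Bool → List Bool → ℕ
  | a :: as, b :: bs => if a = b then lcpLen as bs + 1 else 0
  | _, _ => 0

/-- non-prefix length `KL` of two hashkeys -/
def KL (K1 K2 : List Bool) : ℕ := K1.length - lcpLen K1 K2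

/-- extended element distance `KD_e` -/
def KDe (B : ℕ) (K1 K2 : List Bool) : ℕ :=
  Nat.dist (decimal ((K1.drop (lcpLen K1 K2)).take B))
           (decimal ((K2.drop (lcpLen K1 K2)).take B))

/-- extended hashkey distance `dist_e = KL + KD_e / 2^B` -/
noncomputable def distE (B : ℕ) (K1 K2 : List Bool) : ℝ :=
  (KL K1 K2 : ℝ) + (KDe B K1 K2 : ℝ) / 2 ^ B

/-!
Let `L₁ = lcpLen K₁ K` and `L₂ = lcpLen K₂ K`. In a sorted triple `K ≤ K₁ ≤ K₂` the outer string
shares no longer a prefix with `K` than the inner one, so `L₂ ≤ L₁`. If `L₂ < L₁`, then `KL` grows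
by at least one, which outweighs the fractional part `KD_e / 2^B < 1`. If `L₂ = L₁`, then `KL` is
unchanged, the three suffixes after the common prefix are still sorted, truncating them to `B` bits
keeps them sorted, and the binary value is monotone on strings of equal length, so `KD_e` grows.
-/

namespace List

variable {α : Type*} [LinearOrder α]

-- Mathlib's `LinearOrder (List α)` overrides core's `≤` on lists, so core's `cons_le_cons_iff`
-- does not apply to it.
theorem cons_le_cons_iff' {a b : α} {l₁ l₂ : List α} :
    a :: l₁ ≤ b :: l₂ ↔ a < b ∨ a = b ∧ l₁ ≤ l₂ := by
  rw [le_iff_lt_or_eq, le_iff_lt_or_eq, show a :: l₁ < b :: l₂ ↔ _ from cons_lex_cons_iff,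
    cons.injEq]
  tauto

theorem le_of_append_le_append_left {l l₁ l₂ : List α} (h : l ++ l₁ ≤ l ++ l₂) : l₁ ≤ l₂ := by
  induction l with
  | nil => exact h
  | cons a l ih => exact ih ((cons_le_cons_iff'.mp h).resolve_left (lt_irrefl a)).2

theorem take_le_take (n : ℕ) {l₁ l₂ : List α} (h : l₁ ≤ l₂) : l₁.take n ≤ l₂.take n := by
  induction n generalizing l₁ l₂ with
  | zero => exact le_rfl
  | succ n ih =>
    match l₁, l₂, h with
    | [], l₂, _ => exact le_iff_lt_or_eq.mpr (by cases l₂ <;> simp)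
    | _ :: _, [], h => simp [le_iff_lt_or_eq] at h
    | a :: l₁, b :: l₂, h =>
      simp only [take_succ_cons, cons_le_cons_iff'] at h ⊢
      exact h.imp_right fun ⟨hab, hl⟩ => ⟨hab, ih hl⟩

theorem drop_le_drop_of_take_eq {n : ℕ} {l₁ l₂ : List α} (ht : l₁.take n = l₂.take n)
    (h : l₁ ≤ l₂) : l₁.drop n ≤ l₂.drop n := by
  rw [← take_append_drop n l₁, ← take_append_drop n l₂, ht] at h
  exact le_of_append_le_append_left h

end List

theorem foldl_eq_mul_add_decimal (l : List Bool) (a : ℕ) :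
    l.foldl (fun acc b => 2 * acc + cond b 1 0) a = a * 2 ^ l.length + decimal l := by
  induction l generalizing a with
  | nil => simp [decimal]
  | cons x xs ih =>
    simp only [List.foldl_cons, List.length_cons, decimal] at *
    rw [ih, ih (2 * 0 + cond x 1 0)]
    ring

theorem decimal_cons (x : Bool) (xs : List Bool) :
    decimal (x :: xs) = cond x 1 0 * 2 ^ xs.length + decimal xs := by
  rw [decimal, List.foldl_cons, foldl_eq_mul_add_decimal]
  ring

theorem decimal_lt_two_pow (l : List Bool) : decimal l < 2 ^ l.length := by
  induction l with
  | nil => simp [decimal]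
  | cons x xs ih =>
    rw [decimal_cons, List.length_cons, pow_succ]
    cases x <;> simp <;> omega

theorem decimal_le_decimal {a b : List Bool} (hlen : a.length = b.length) (h : a ≤ b) :
    decimal a ≤ decimal b := by
  induction a generalizing b with
  | nil => rw [List.eq_nil_of_length_eq_zero hlen.symm]
  | cons x as ih =>
    obtain _ | ⟨y, bs⟩ := b
    · simp at hlen
    replace hlen : as.length = bs.length := by simpa using hlen
    rw [decimal_cons, decimal_cons, hlen]
    rcases List.cons_le_cons_iff'.mp h with hxy | ⟨rfl, hle⟩
    · obtain ⟨rfl, rfl⟩ := Bool.lt_iff.mp hxy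
      have := hlen ▸ decimal_lt_two_pow as
      simp only [cond_false, cond_true]
      omega
    · exact Nat.add_le_add_left (ih hlen hle) _

theorem lcpLen_le_length : ∀ a b : List Bool, lcpLen a b ≤ a.length
  | [], _ => by simp [lcpLen]
  | _ :: _, [] => by simp [lcpLen]
  | x :: as, y :: bs => by
    by_cases hxy : x = y
    · simpa [lcpLen, hxy] using lcpLen_le_length as bs
    · simp [lcpLen, hxy]

theorem take_lcpLen : ∀ a b : List Bool, a.take (lcpLen a b) = b.take (lcpLen a b)
  | [], _ => by simp [lcpLen]
  | _ :: _, [] => by simp [lcpLen]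
  | x :: as, y :: bs => by
    by_cases hxy : x = y
    · subst hxy
      simp [lcpLen, take_lcpLen as bs]
    · simp [lcpLen, hxy]

theorem lcpLen_le_lcpLen {a b c : List Bool} (hab : a ≤ b) (hbc : b ≤ c) :
    lcpLen c a ≤ lcpLen b a := by
  induction a generalizing b c with
  | nil => cases c <;> simp [lcpLen]
  | cons x as ih =>
    obtain _ | ⟨y, bs⟩ := b
    · simp [le_iff_lt_or_eq] at hab
    obtain _ | ⟨z, cs⟩ := c
    · simp [lcpLen]
    rcases List.cons_le_cons_iff'.mp hab with hxy | ⟨rfl, has⟩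
    · have hyz : y ≤ z := (List.cons_le_cons_iff'.mp hbc).elim le_of_lt (·.1.le)
      simp [lcpLen, (hxy.trans_le hyz).ne']
    · rcases List.cons_le_cons_iff'.mp hbc with hxz | ⟨rfl, hbs⟩
      · simp [lcpLen, hxz.ne']
      · simpa [lcpLen] using ih has hbs

theorem KDe_lt_two_pow (B : ℕ) (K₁ K₂ : List Bool) : KDe B K₁ K₂ < 2 ^ B := by
  have hlt : ∀ l : List Bool, decimal (l.take B) < 2 ^ B := fun l =>
    (decimal_lt_two_pow _).trans_le (Nat.pow_le_pow_right two_pos (List.length_take_le B l))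
  have h₁ := hlt (K₁.drop (lcpLen K₁ K₂))
  have h₂ := hlt (K₂.drop (lcpLen K₁ K₂))
  unfold KDe Nat.dist
  omega

theorem decimal_take_drop_le (B : ℕ) {n : ℕ} {a b : List Bool} (hlen : a.length = b.length)
    (ht : a.take n = b.take n) (h : a ≤ b) :
    decimal ((a.drop n).take B) ≤ decimal ((b.drop n).take B) :=
  decimal_le_decimal (by simp [hlen]) (List.take_le_take B (List.drop_le_drop_of_take_eq ht h))

theorem KDe_le_KDe (B : ℕ) {K K₁ K₂ : List Bool} (hlen₁ : K.length = K₁.length)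
    (hlen₂ : K₁.length = K₂.length) (hL : lcpLen K₁ K = lcpLen K₂ K) (hK₁ : K ≤ K₁)
    (h₁₂ : K₁ ≤ K₂) : KDe B K₁ K ≤ KDe B K₂ K := by
  have h₀ := decimal_take_drop_le B hlen₁ (take_lcpLen K₁ K).symm hK₁
  have h₁ := decimal_take_drop_le B hlen₂
    (by rw [take_lcpLen K₁ K, hL, take_lcpLen K₂ K]) h₁₂
  unfold KDe Nat.dist
  rw [← hL]
  omega

theorem KL_le_distE (B : ℕ) (K₁ K₂ : List Bool) : (KL K₁ K₂ : ℝ) ≤ distE B K₁ K₂ :=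
  le_add_of_nonneg_right (by positivity)

theorem distE_lt_KL_add_one (B : ℕ) (K₁ K₂ : List Bool) : distE B K₁ K₂ < KL K₁ K₂ + 1 := by
  have : (KDe B K₁ K₂ : ℝ) / 2 ^ B < 1 := by
    rw [div_lt_one (by positivity)]
    exact_mod_cast KDe_lt_two_pow B K₁ K₂
  exact add_lt_add_right this _

theorem stmt_8_general (m B : ℕ) (K K1 K2 : List Bool)
    (h : K.length = m) (h1 : K1.length = m) (h2 : K2.length = m)
    (hK1 : K ≤ K1) (h12 : K1 ≤ K2) :
    distE B K1 K ≤ distE B K2 K := by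
  rcases (lcpLen_le_lcpLen hK1 h12).eq_or_lt with hL | hL
  · have hKL : KL K1 K = KL K2 K := by simp only [KL, h1, h2, hL]
    have hKDe := KDe_le_KDe B (h.trans h1.symm) (h1.trans h2.symm) hL.symm hK1 h12
    unfold distE
    rw [hKL]
    gcongr
  · have hKL : KL K1 K + 1 ≤ KL K2 K := by
      have := lcpLen_le_length K1 K
      unfold KL
      omega
    calc distE B K1 K ≤ KL K1 K + 1 := (distE_lt_KL_add_one B K1 K).le
      _ ≤ KL K2 K := by exact_mod_cast hKL
      _ ≤ distE B K2 K := KL_le_distE B K2 K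

theorem stmt_8 (m B : ℕ) (hB : 1 ≤ B) (K K1 K2 : List Bool)
    (h : K.length = m) (h1 : K1.length = m) (h2 : K2.length = m)
    (hK1 : K ≤ K1) (h12 : K1 ≤ K2) :
    distE B K1 K ≤ distE B K2 K :=
  stmt_8_general m B K K1 K2 h h1 h2 hK1 h12
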